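/- If T₁, …, T_n are trees, each with at least one edge and none isomorphic to K₂, then pmd(T₁ □ ⋯ □ T_n) = Δ(T₁) + ⋯ + Δ(T_n), i.e., the pmd of the Cartesian product equals its maximum degree. -/

import Mathlib

open SimpleGraph

variable {V : Type*}

/-- A positive matching in a simple graph: a set `M` of pairwise disjoint edges of `G` together
with a vertex weighting `w` such that an edge `uv` of `G` satisfies `w u + w v > 0` iff the edge
belongs to `M`. -/
def IsPositiveMatching (G : SimpleGraph V) (M : Set (Sym2 V)) : Prop :=
  M ⊆ G.edgeSet ∧
  (∀ e ∈ M, ∀ f ∈ M, e ≠ f → ∀ v : V, v ∈ e → v ∉ f) ∧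
  ∃ w : V → ℝ, ∀ u v : V, G.Adj u v → (0 < w u + w v ↔ s(u, v) ∈ M)

/-- A positive matching decomposition of `G` with parts `E 0, …, E (p-1)`: an ordered partition
of the edge set of `G` such that each part is a positive matching of `G` minus the earlier
parts. -/
def IsPMD (G : SimpleGraph V) {p : ℕ} (E : Fin p → Set (Sym2 V)) : Prop :=
  (∀ i j : Fin p, i ≠ j → Disjoint (E i) (E j)) ∧
  (⋃ i, E i) = G.edgeSet ∧
  ∀ i : Fin p, IsPositiveMatching (G.deleteEdges (⋃ j : Fin p, ⋃ (_ : j < i), E j)) (E i)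

/-- The minimum number of parts in a positive matching decomposition of `G`. -/
noncomputable def pmd (G : SimpleGraph V) : ℕ :=
  sInf {p : ℕ | ∃ E : Fin p → Set (Sym2 V), IsPMD G E}

/-- Box (Cartesian) product of a family of graphs. -/
def boxProdPi {ι : Type*} {W : ι → Type*} (G : ∀ i, SimpleGraph (W i)) :
    SimpleGraph (∀ i, W i) where
  Adj a b := ∃ i, (G i).Adj (a i) (b i) ∧ ∀ j, j ≠ i → a j = b j
  symm := ⟨fun _ _ ⟨i, h, hj⟩ => ⟨i, h.symm, fun j hji => (hj j hji).symm⟩⟩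
  loopless := ⟨fun a ⟨i, h, _⟩ => (G i).loopless.irrefl (a i) h⟩

/-!
The lower bound holds for every graph: the parts of a positive matching decomposition are
matchings, so the edges at a vertex lie in distinct parts, and the product has a vertex of degree
`Δ(T₁) + ⋯ + Δ(Tₙ)`.

For the upper bound, root every tree and colour its edges properly with `Δ(Tᵢ)` colours. An edge
`uv` of the product in direction `i` gets the colour of `uᵢvᵢ` shifted by the total depth `σ` of `u`
in the other factors, modulo `Δ(Tᵢ)`, inside a block of `Δ(Tᵢ)` colours reserved for direction `i`;
the blocks are ordered by `i`. This is a proper edge colouring, and colour `k` of block `i` is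
separated from all later edges by a weight `w z = x_σ(zᵢ)`, where `x_σ` is the alternating sum,
along the path from the root, of a pattern that is `1` on the tree edges of shifted colour `k` and
very negative elsewhere. Edges in direction `i` then have weight sum exactly the pattern, and an
edge in a later direction changes `σ` by one; as `Δ(Tᵢ) ≥ 2` (this is where `Tᵢ ≇ K₂` enters), at
most one of the two shifted patterns is `1` at `zᵢ`, which makes the weight sum non-positive.
-/

section ColorClasses

def colorClass (G : SimpleGraph V) (c : V → V → ℕ) (q : ℕ) : Set (Sym2 V) :=
  {e | ∃ u v, G.Adj u v ∧ c u v = q ∧ s(u, v) = e}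

variable {G : SimpleGraph V} {c : V → V → ℕ}

lemma mk_mem_colorClass (hc : ∀ u v, G.Adj u v → c u v = c v u) {q : ℕ} {u v : V} :
    s(u, v) ∈ colorClass G c q ↔ G.Adj u v ∧ c u v = q := by
  constructor
  · rintro ⟨a, b, hab, rfl, he⟩
    rcases Sym2.eq_iff.1 he with ⟨rfl, rfl⟩ | ⟨rfl, rfl⟩
    · exact ⟨hab, rfl⟩
    · exact ⟨hab.symm, (hc _ _ hab).symm⟩
  · rintro ⟨h, rfl⟩
    exact ⟨u, v, h, rfl, rfl⟩

theorem isPMD_colorClass {p : ℕ} (hc : ∀ u v, G.Adj u v → c u v = c v u)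
    (hlt : ∀ u v, G.Adj u v → c u v < p)
    (hmatch : ∀ z a b, G.Adj z a → G.Adj z b → c z a = c z b → a = b)
    (hweight : ∀ u₀ v₀, G.Adj u₀ v₀ → ∃ w : V → ℝ, ∀ u v, G.Adj u v → c u₀ v₀ ≤ c u v →
      (0 < w u + w v ↔ c u v = c u₀ v₀)) :
    IsPMD G fun q : Fin p => colorClass G c q := by
  have mem := fun {q u v} => mk_mem_colorClass (q := q) (u := u) (v := v) hc
  refine ⟨fun i j hij => Set.disjoint_left.2 ?_, ?_, fun q => ⟨?_, ?_, ?_⟩⟩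
  · rintro e ⟨u, v, -, hi, rfl⟩ hj
    exact hij (Fin.ext (hi.symm.trans (mem.1 hj).2))
  · ext e
    induction e using Sym2.ind with
    | _ u v =>
      simp only [Set.mem_iUnion, mem, mem_edgeSet]
      exact ⟨fun ⟨_, h, _⟩ => h, fun h => ⟨⟨c u v, hlt u v h⟩, h, rfl⟩⟩
  · rintro e ⟨u, v, h, hq, rfl⟩
    refine deleteEdges_adj.2 ⟨h, fun hdel => ?_⟩
    simp only [Set.mem_iUnion, mem] at hdel
    obtain ⟨j, hjq, -, hj⟩ := hdel
    exact (Fin.lt_def.1 hjq).ne (hj.symm.trans hq)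
  · intro e he f hf hne z hze hzf
    obtain ⟨a, rfl⟩ := Sym2.mem_iff_exists.1 hze
    obtain ⟨b, rfl⟩ := Sym2.mem_iff_exists.1 hzf
    rw [mem] at he hf
    exact hne (by rw [hmatch z a b he.1 hf.1 (he.2.trans hf.2.symm)])
  · by_cases hq : ∃ u₀ v₀, G.Adj u₀ v₀ ∧ c u₀ v₀ = q
    · obtain ⟨u₀, v₀, h₀, hq₀⟩ := hq
      obtain ⟨w, hw⟩ := hweight u₀ v₀ h₀
      refine ⟨w, fun u v huv => ?_⟩
      obtain ⟨huv, hkeep⟩ := deleteEdges_adj.1 huv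
      have hle : c u₀ v₀ ≤ c u v := by
        by_contra! hlt'
        refine hkeep (Set.mem_iUnion.2 ⟨⟨c u v, hlt u v huv⟩, Set.mem_iUnion.2 ⟨?_, ?_⟩⟩)
        exacts [Fin.lt_def.2 (hq₀ ▸ hlt'), mem.2 ⟨huv, rfl⟩]
      rw [hw u v huv hle, mem, hq₀]
      exact (and_iff_right huv).symm
    · refine ⟨fun _ => -1, fun u v huv => ?_⟩
      rw [mem]
      constructor
      · intro h; norm_num at h
      · rintro ⟨h, hcq⟩
        exact (hq ⟨u, v, h, hcq⟩).elim

theorem IsPMD.card_le {p : ℕ} {E : Fin p → Set (Sym2 V)} (hE : IsPMD G E) {ι : Type*}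
    [Fintype ι] {v : V} {f : ι → V} (hf : Function.Injective f) (hadj : ∀ a, G.Adj v (f a)) :
    Fintype.card ι ≤ p := by
  have hcover : ∀ a, ∃ q, s(v, f a) ∈ E q := fun a => by
    simpa only [← mem_edgeSet, ← hE.2.1, Set.mem_iUnion] using hadj a
  choose q hq using hcover
  refine (Fintype.card_le_of_injective q fun a b hab => hf ?_).trans_eq (Fintype.card_fin p)
  by_contra hne
  exact (hE.2.2 (q b)).2.1 _ (hab ▸ hq a) _ (hq b) (mt Sym2.congr_right.1 hne) v
    (Sym2.mem_mk_left _ _) (Sym2.mem_mk_left _ _)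

lemma pmd_eq_of_isPMD {p : ℕ} {E : Fin p → Set (Sym2 V)} (hE : IsPMD G E)
    (hmin : ∀ q (E' : Fin q → Set (Sym2 V)), IsPMD G E' → p ≤ q) : pmd G = p :=
  le_antisymm (Nat.sInf_le ⟨E, hE⟩) (le_csInf ⟨p, E, hE⟩ fun q ⟨E', hE'⟩ => hmin q E' hE')

end ColorClasses

namespace SimpleGraph

variable {W : Type*} {T : SimpleGraph W} {r t u v a b : W}

lemma exists_adj_dist_add_one_of_dist_pos (h : 0 < T.dist r v) :
    ∃ u, T.Adj u v ∧ T.dist r u + 1 = T.dist r v := by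
  obtain ⟨hv, hr⟩ := dist_ne_zero_iff_ne_and_reachable.1 h.ne'
  obtain ⟨p, -, hp⟩ := hr.symm.exists_path_of_dist
  obtain ⟨u, hvu, q, rfl⟩ := Walk.exists_eq_cons_of_ne hv.symm p
  have hq : T.dist r u ≤ q.length := dist_comm (G := T) ▸ dist_le q
  have hvu' : T.dist r v ≤ T.dist r u + 1 := by
    rcases hvu.symm.diff_dist_adj (u := r) with h | h | h <;> omega
  rw [dist_comm, ← hp, Walk.length_cons] at hvu' ⊢
  exact ⟨u, hvu.symm, by omega⟩

open Classical in
noncomputable def parent (T : SimpleGraph W) (r v : W) : W :=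
  if h : ∃ u, T.Adj u v ∧ T.dist r u + 1 = T.dist r v then h.choose else v

lemma adj_parent (h : 0 < T.dist r v) : T.Adj (T.parent r v) v := by
  have hex := exists_adj_dist_add_one_of_dist_pos h
  rw [parent, dif_pos hex]
  exact hex.choose_spec.1

lemma dist_parent_add_one (h : 0 < T.dist r v) : T.dist r (T.parent r v) + 1 = T.dist r v := by
  have hex := exists_adj_dist_add_one_of_dist_pos h
  rw [parent, dif_pos hex]
  exact hex.choose_spec.2

lemma IsAcyclic.eq_penultimate_of_dist_add_one (hT : T.IsAcyclic) {Q : T.Walk r v}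
    (hQ : Q.IsPath) (h : T.Adj u v) (hd : T.dist r u + 1 = T.dist r v) : u = Q.penultimate := by
  classical
  obtain ⟨q, hq, hql⟩ := (Q.reachable.trans h.symm.reachable).exists_path_of_dist
  have hv : v ∉ q.support := fun hv => by
    have := dist_le (q.takeUntil v hv)
    have := q.length_takeUntil_le_length hv
    omega
  exact hT.eq_penultimate_of_adj_end hQ h.symm
    (hT.mem_support_of_ne_mem_support_of_adj_of_isPath hQ hq h.symm hv)

lemma IsAcyclic.eq_parent (hT : T.IsAcyclic) (h : T.Adj u v) (hd : T.dist r u + 1 = T.dist r v) :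
    u = T.parent r v := by
  have hpos : 0 < T.dist r v := by omega
  obtain ⟨Q, hQ, -⟩ := (Reachable.of_dist_ne_zero hpos.ne').exists_path_of_dist
  rw [hT.eq_penultimate_of_dist_add_one hQ h hd,
    hT.eq_penultimate_of_dist_add_one hQ (adj_parent hpos) (dist_parent_add_one hpos)]

section EdgeColoring

variable [Fintype W] [DecidableRel T.Adj]

variable (T) in
noncomputable def neighborIndex (u v : W) : ℕ :=
  if h : T.Adj u v then (T.neighborFinset u).equivFin ⟨v, (T.mem_neighborFinset u v).2 h⟩ else 0

lemma neighborIndex_lt (hΔ : 0 < T.maxDegree) (u v : W) : T.neighborIndex u v < T.maxDegree := by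
  unfold neighborIndex
  split_ifs
  · exact (Fin.is_lt _).trans_le
      ((T.card_neighborFinset_eq_degree u).trans_le (T.degree_le_maxDegree u))
  · exact hΔ

lemma neighborIndex_injective (ha : T.Adj u a) (hb : T.Adj u b)
    (h : T.neighborIndex u a = T.neighborIndex u b) : a = b := by
  rw [neighborIndex, neighborIndex, dif_pos ha, dif_pos hb] at h
  simpa using (T.neighborFinset u).equivFin.injective (Fin.ext h)

variable (T) in
/-- The colour of the edge from `t` to its parent `u`: the neighbour index at `u`, transposed so
that the parent edge of `u` gets a colour different from `childColor u`. For `u = r` the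
transposition is the identity, as `childColor r = neighborIndex r r = 0`. -/
noncomputable def childColor (r t : W) : ℕ :=
  if 0 < T.dist r t then
    Equiv.swap (childColor r (T.parent r t))
      (T.neighborIndex (T.parent r t) (T.parent r (T.parent r t)))
      (T.neighborIndex (T.parent r t) t)
  else 0
termination_by T.dist r t
decreasing_by have := dist_parent_add_one ‹_›; omega

lemma childColor_of_dist_pos (h : 0 < T.dist r t) :
    T.childColor r t = Equiv.swap (T.childColor r (T.parent r t))
      (T.neighborIndex (T.parent r t) (T.parent r (T.parent r t)))
      (T.neighborIndex (T.parent r t) t) := by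
  rw [childColor, if_pos h]

lemma childColor_lt (hΔ : 0 < T.maxDegree) (t : W) : T.childColor r t < T.maxDegree := by
  induction hd : T.dist r t using Nat.strong_induction_on generalizing t with
  | _ d ih =>
    rw [childColor]
    split_ifs with h
    · have hc := ih _ (by have := dist_parent_add_one h; omega) (T.parent r t) rfl
      rw [Equiv.swap_apply_def]
      split_ifs
      exacts [neighborIndex_lt hΔ _ _, hc, neighborIndex_lt hΔ _ _]
    · exact hΔ

lemma childColor_injective_of_parent_eq (ha : 0 < T.dist r a) (hb : 0 < T.dist r b)
    (hab : T.parent r a = T.parent r b) (h : T.childColor r a = T.childColor r b) : a = b := by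
  rw [childColor_of_dist_pos ha, childColor_of_dist_pos hb, hab] at h
  exact neighborIndex_injective (hab ▸ adj_parent ha) (adj_parent hb) ((Equiv.injective _) h)

lemma childColor_ne_childColor_parent (ht : 0 < T.dist r t) (hu : 0 < T.dist r (T.parent r t)) :
    T.childColor r t ≠ T.childColor r (T.parent r t) := by
  intro h
  rw [childColor_of_dist_pos ht] at h
  have htu := neighborIndex_injective (adj_parent ht) (adj_parent hu).symm
    ((Equiv.injective _) (h.trans (Equiv.swap_apply_right _ _).symm))
  have h1 := dist_parent_add_one ht
  have h2 := dist_parent_add_one hu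
  rw [← htu] at h2
  omega

variable (T) in
noncomputable def edgeColor (r a b : W) : ℕ :=
  if T.dist r a < T.dist r b then T.childColor r b else T.childColor r a

lemma edgeColor_lt (hΔ : 0 < T.maxDegree) (a b : W) : T.edgeColor r a b < T.maxDegree := by
  unfold edgeColor
  split_ifs <;> exact childColor_lt hΔ _

lemma IsTree.edgeColor_comm (hT : T.IsTree) (h : T.Adj a b) :
    T.edgeColor r a b = T.edgeColor r b a := by
  have := hT.dist_ne_of_adj r h
  unfold edgeColor
  split_ifs <;> first | rfl | omega

lemma IsAcyclic.childColor_ne_of_dist_add_one (hT : T.IsAcyclic) (hta : T.Adj t a)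
    (hd : T.dist r t + 1 = T.dist r a) (ht : 0 < T.dist r t) :
    T.childColor r a ≠ T.childColor r t := by
  have hp := hT.eq_parent hta hd
  exact hp ▸ childColor_ne_childColor_parent (by omega) (hp ▸ ht)

lemma IsTree.edgeColor_injective (hT : T.IsTree) (ha : T.Adj t a) (hb : T.Adj t b)
    (h : T.edgeColor r t a = T.edgeColor r t b) : a = b := by
  unfold edgeColor at h
  rcases hT.dist_eq_dist_add_one_of_adj r ha with hda | hda <;>
    rcases hT.dist_eq_dist_add_one_of_adj r hb with hdb | hdb
  · exact (hT.isAcyclic.eq_parent ha.symm hda.symm).trans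
      (hT.isAcyclic.eq_parent hb.symm hdb.symm).symm
  · rw [if_neg (by omega), if_pos (by omega)] at h
    exact absurd h.symm (hT.isAcyclic.childColor_ne_of_dist_add_one hb hdb.symm (by omega))
  · rw [if_pos (by omega), if_neg (by omega)] at h
    exact absurd h (hT.isAcyclic.childColor_ne_of_dist_add_one ha hda.symm (by omega))
  · rw [if_pos (by omega), if_pos (by omega)] at h
    have hpa := hT.isAcyclic.eq_parent ha hda.symm
    have hpb := hT.isAcyclic.eq_parent hb hdb.symm
    exact childColor_injective_of_parent_eq (by omega) (by omega) (hpa ▸ hpb) h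

end EdgeColoring

section Weights

variable {f g : W → ℝ}

variable (T) in
noncomputable def altWeight (r : W) (f : W → ℝ) (t : W) : ℝ :=
  if 0 < T.dist r t then f t - altWeight r f (T.parent r t) else -1
termination_by T.dist r t
decreasing_by have := dist_parent_add_one ‹_›; omega

lemma altWeight_of_dist_pos (h : 0 < T.dist r t) :
    T.altWeight r f t = f t - T.altWeight r f (T.parent r t) := by
  rw [altWeight, if_pos h]

lemma altWeight_of_dist_eq_zero (h : T.dist r t = 0) : T.altWeight r f t = -1 := by
  rw [altWeight, if_neg (by omega)]

lemma altWeight_parent_add (h : 0 < T.dist r t) :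
    T.altWeight r f (T.parent r t) + T.altWeight r f t = f t := by
  rw [altWeight_of_dist_pos h]
  ring

lemma abs_altWeight_le (hf : ∀ t, |f t| ≤ 2 * 6 ^ T.dist r t) (t : W) :
    |T.altWeight r f t| ≤ 3 * 6 ^ T.dist r t := by
  induction hd : T.dist r t using Nat.strong_induction_on generalizing t with
  | _ d ih =>
    cases d with
    | zero =>
      rw [altWeight_of_dist_eq_zero hd]
      norm_num
    | succ d =>
      have hp := dist_parent_add_one (T := T) (r := r) (v := t) (by omega)
      have hpar := ih d (by omega) (T.parent r t) (by omega)
      have hft := hf t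
      rw [hd] at hft
      rw [altWeight_of_dist_pos (by omega)]
      calc |f t - T.altWeight r f (T.parent r t)|
          ≤ |f t| + |T.altWeight r f (T.parent r t)| := abs_sub _ _
        _ ≤ 2 * 6 ^ (d + 1) + 3 * 6 ^ d := add_le_add hft hpar
        _ ≤ 3 * 6 ^ (d + 1) := by
          rw [pow_succ]
          linarith [pow_pos (by norm_num : (0 : ℝ) < 6) d]

lemma altWeight_add_altWeight_nonpos (hf : ∀ t, |f t| ≤ 2 * 6 ^ T.dist r t)
    (hg : ∀ t, |g t| ≤ 2 * 6 ^ T.dist r t) (hfg : ∀ t, f t + g t ≤ 1 - 2 * 6 ^ T.dist r t)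
    (t : W) : T.altWeight r f t + T.altWeight r g t ≤ 0 := by
  rcases Nat.eq_zero_or_pos (T.dist r t) with h | h
  · rw [altWeight_of_dist_eq_zero h, altWeight_of_dist_eq_zero h]
    norm_num
  · obtain ⟨d, hd⟩ : ∃ d, T.dist r (T.parent r t) = d := ⟨_, rfl⟩
    have hdt : T.dist r t = d + 1 := by rw [← hd, dist_parent_add_one h]
    have hft := abs_le.1 (abs_altWeight_le hf (T.parent r t))
    have hgt := abs_le.1 (abs_altWeight_le hg (T.parent r t))
    have hsum := hfg t
    rw [hd] at hft hgt
    rw [hdt, pow_succ] at hsum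
    rw [altWeight_of_dist_pos h, altWeight_of_dist_pos h]
    linarith [one_le_pow₀ (by norm_num : (1 : ℝ) ≤ 6) (n := d)]

variable [Fintype W] [DecidableRel T.Adj]

variable (T) in
/-- The negative values grow like `6 ^ depth` so that they dominate the alternating sums of
`altWeight`. -/
noncomputable def hitPattern (r : W) (k σ : ℕ) (t : W) : ℝ :=
  if (T.childColor r t + σ) % T.maxDegree = k then 1 else -2 * 6 ^ T.dist r t

variable (T) in
noncomputable def hitWeight (r : W) (k σ : ℕ) : W → ℝ :=
  T.altWeight r (T.hitPattern r k σ)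

lemma abs_hitPattern_le (k σ : ℕ) (t : W) : |T.hitPattern r k σ t| ≤ 2 * 6 ^ T.dist r t := by
  have := one_le_pow₀ (by norm_num : (1 : ℝ) ≤ 6) (n := T.dist r t)
  unfold hitPattern
  split_ifs
  · rw [abs_one]; linarith
  · rw [abs_of_neg (by linarith)]; linarith

lemma hitPattern_add_succ_le (hΔ : 2 ≤ T.maxDegree) (k σ : ℕ) (t : W) :
    T.hitPattern r k σ t + T.hitPattern r k (σ + 1) t ≤ 1 - 2 * 6 ^ T.dist r t := by
  have := one_le_pow₀ (by norm_num : (1 : ℝ) ≤ 6) (n := T.dist r t)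
  unfold hitPattern
  split_ifs with h₁ h₂
  · have h : T.childColor r t + σ + 1 ≡ T.childColor r t + σ + 0 [MOD T.maxDegree] :=
      (add_assoc _ σ 1 ▸ h₂).trans h₁.symm
    have := Nat.le_of_dvd one_pos (Nat.modEq_zero_iff_dvd.1 (Nat.ModEq.add_left_cancel' _ h))
    omega
  all_goals linarith

lemma IsTree.hitWeight_add_pos_iff (hT : T.IsTree) (h : T.Adj a b) {k σ : ℕ} :
    0 < T.hitWeight r k σ a + T.hitWeight r k σ b ↔
      (T.edgeColor r a b + σ) % T.maxDegree = k := by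
  have key : ∀ a b, T.Adj a b → T.dist r a + 1 = T.dist r b →
      (0 < T.hitWeight r k σ a + T.hitWeight r k σ b ↔
        (T.edgeColor r a b + σ) % T.maxDegree = k) := by
    intro a b h hd
    rw [hitWeight, edgeColor, if_pos (by omega), hT.isAcyclic.eq_parent h hd,
      altWeight_parent_add (by omega), hitPattern]
    have := pow_pos (by norm_num : (0 : ℝ) < 6) (T.dist r b)
    split_ifs with hk
    · exact iff_of_true one_pos hk
    · exact iff_of_false (by linarith) hk
  rcases hT.dist_eq_dist_add_one_of_adj r h with hd | hd
  · rw [add_comm, hT.edgeColor_comm h]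
    exact key b a h.symm hd.symm
  · exact key a b h hd.symm

lemma hitWeight_add_succ_nonpos (hΔ : 2 ≤ T.maxDegree) (k σ : ℕ) (t : W) :
    T.hitWeight r k σ t + T.hitWeight r k (σ + 1) t ≤ 0 :=
  altWeight_add_altWeight_nonpos (abs_hitPattern_le k σ) (abs_hitPattern_le k (σ + 1))
    (hitPattern_add_succ_le hΔ k σ) t

end Weights

lemma IsTree.two_le_maxDegree [Fintype W] [DecidableRel T.Adj] (hT : T.IsTree) {x y : W}
    (hxy : T.Adj x y)
    (hK : ¬ Nonempty (T ≃g (⊤ : SimpleGraph (Fin 2)))) : 2 ≤ T.maxDegree := by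
  classical
  by_contra! hΔ
  have hcard : Fintype.card W = 2 := by
    have hsum : ∑ v, T.degree v ≤ Fintype.card W := calc
      ∑ v, T.degree v ≤ ∑ _v : W, 1 :=
        Finset.sum_le_sum fun v _ => (T.degree_le_maxDegree v).trans (Nat.lt_succ_iff.1 hΔ)
      _ = Fintype.card W := by simp
    have := T.sum_degrees_eq_twice_card_edges
    have := hT.card_edgeFinset
    have := Fintype.one_lt_card_iff.2 ⟨x, y, hxy.ne⟩
    omega
  have huniv : ({x, y} : Finset W) = Finset.univ :=
    Finset.eq_univ_of_card _ (by rw [Finset.card_pair hxy.ne, hcard])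
  have hmem : ∀ z, z = x ∨ z = y := fun z => by
    simpa [← huniv] using Finset.mem_univ z
  refine hK ⟨{ toEquiv := Fintype.equivFinOfCardEq hcard, map_rel_iff' := fun {a b} => ?_ }⟩
  simp only [top_adj, ne_eq, EmbeddingLike.apply_eq_iff_eq]
  refine ⟨fun hab => ?_, fun h => T.ne_of_adj h⟩
  rcases hmem a with rfl | rfl <;> rcases hmem b with rfl | rfl
  exacts [absurd rfl hab, hxy, hxy.symm, absurd rfl hab]

end SimpleGraph

lemma boxProdPi_adj_update {ι : Type*} [DecidableEq ι] {W : ι → Type*}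
    {G : ∀ i, SimpleGraph (W i)} {x : ∀ i, W i} {i : ι} {y : W i} (h : (G i).Adj (x i) y) :
    (boxProdPi G).Adj x (Function.update x i y) :=
  ⟨i, by rwa [Function.update_self], fun _ hj => (Function.update_of_ne hj _ _).symm⟩

section BoxProduct

variable {n : ℕ} {W : Fin n → Type*} {T : ∀ i, SimpleGraph (W i)} {r : ∀ i, W i}

variable (T r) in
noncomputable def depthExcept (i : Fin n) (z : ∀ j, W j) : ℕ :=
  ∑ j ∈ Finset.univ.erase i, (T j).dist (r j) (z j)

lemma depthExcept_congr {i : Fin n} {u v : ∀ j, W j} (h : ∀ j ≠ i, u j = v j) :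
    depthExcept T r i u = depthExcept T r i v :=
  Finset.sum_congr rfl fun j hj => by rw [h j (Finset.ne_of_mem_erase hj)]

lemma depthExcept_adj {i j : Fin n} (hT : (T j).IsTree) (hij : j ≠ i) {u v : ∀ j, W j}
    (hj : (T j).Adj (u j) (v j)) (hoth : ∀ l ≠ j, u l = v l) :
    depthExcept T r i v = depthExcept T r i u + 1 ∨
      depthExcept T r i u = depthExcept T r i v + 1 := by
  have hmem : j ∈ Finset.univ.erase i := Finset.mem_erase.2 ⟨hij, Finset.mem_univ _⟩
  have hrest : ∑ l ∈ (Finset.univ.erase i).erase j, (T l).dist (r l) (u l) =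
      ∑ l ∈ (Finset.univ.erase i).erase j, (T l).dist (r l) (v l) :=
    Finset.sum_congr rfl fun l hl => by rw [hoth l (Finset.ne_of_mem_erase hl)]
  rw [depthExcept, depthExcept, ← Finset.add_sum_erase _ _ hmem, ← Finset.add_sum_erase _ _ hmem,
    hrest]
  rcases hT.dist_eq_dist_add_one_of_adj (r j) hj with h | h <;> omega

variable [∀ i, Fintype (W i)] [∀ i, DecidableRel (T i).Adj]

variable (T) in
lemma sum_degree_le_of_isPMD_boxProdPi {p : ℕ} {E : Fin p → Set (Sym2 (∀ i, W i))}
    (hE : IsPMD (boxProdPi T) E) (x : ∀ i, W i) : ∑ i, (T i).degree (x i) ≤ p := by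
  let f : (Σ i, (T i).neighborFinset (x i)) → ∀ i, W i := fun y => Function.update x y.1 y.2
  have hf : Function.Injective f := by
    rintro ⟨i, y, hy⟩ ⟨j, z, hz⟩ h
    have hyx : y ≠ x i := ((T i).ne_of_adj (((T i).mem_neighborFinset _ _).1 hy)).symm
    obtain rfl : i = j := by
      by_contra hij
      exact hyx (by simpa [f, Function.update_of_ne hij] using congrFun h i)
    obtain rfl : y = z := by simpa [f] using congrFun h i
    rfl
  simpa only [Fintype.card_sigma, Fintype.card_coe, card_neighborFinset_eq_degree] using
    hE.card_le hf fun y => boxProdPi_adj_update (((T y.1).mem_neighborFinset _ _).1 y.2.2)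

variable (T) in
def blockStart (i : Fin n) : ℕ :=
  ∑ j ∈ Finset.Iio i, (T j).maxDegree

lemma blockStart_add_maxDegree (i : Fin n) :
    blockStart T i + (T i).maxDegree = ∑ j ∈ Finset.Iic i, (T j).maxDegree := by
  rw [← Finset.Iio_insert, Finset.sum_insert Finset.notMem_Iio_self, add_comm, blockStart]

lemma blockStart_add_le {i j : Fin n} (h : i < j) :
    blockStart T i + (T i).maxDegree ≤ blockStart T j := by
  rw [blockStart_add_maxDegree]
  exact Finset.sum_le_sum_of_subset fun l hl => Finset.mem_Iio.2 ((Finset.mem_Iic.1 hl).trans_lt h)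

lemma blockStart_add_le_sum (i : Fin n) :
    blockStart T i + (T i).maxDegree ≤ ∑ j, (T j).maxDegree := by
  rw [blockStart_add_maxDegree]
  exact Finset.sum_le_sum_of_subset (Finset.subset_univ _)

lemma eq_of_blockStart_add_eq {i j : Fin n} {k l : ℕ} (hk : k < (T i).maxDegree)
    (hl : l < (T j).maxDegree) (h : blockStart T i + k = blockStart T j + l) : i = j ∧ k = l := by
  rcases lt_trichotomy i j with hij | rfl | hij
  · have := blockStart_add_le (T := T) hij; omega
  · omega
  · have := blockStart_add_le (T := T) hij; omega

variable (T r) in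
/-- Only the summand of the direction of the edge `uv` survives. -/
noncomputable def boxColor (u v : ∀ i, W i) : ℕ :=
  ∑ i, if (T i).Adj (u i) (v i) then
    blockStart T i + ((T i).edgeColor (r i) (u i) (v i) + depthExcept T r i u) % (T i).maxDegree
  else 0

lemma boxColor_eq {i : Fin n} {u v : ∀ i, W i} (hi : (T i).Adj (u i) (v i))
    (hoth : ∀ j ≠ i, u j = v j) :
    boxColor T r u v = blockStart T i +
      ((T i).edgeColor (r i) (u i) (v i) + depthExcept T r i u) % (T i).maxDegree := by
  rw [boxColor, Fintype.sum_eq_single i fun j hj => by rw [hoth j hj, if_neg ((T j).irrefl)],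
    if_pos hi]

variable (htree : ∀ i, (T i).IsTree) (hΔ : ∀ i, 2 ≤ (T i).maxDegree)
include htree hΔ

lemma exists_weight_boxColor {i : Fin n} {u₀ v₀ : ∀ i, W i} (hi₀ : (T i).Adj (u₀ i) (v₀ i))
    (ho₀ : ∀ j ≠ i, u₀ j = v₀ j) :
    ∃ w : (∀ i, W i) → ℝ, ∀ u v, (boxProdPi T).Adj u v → boxColor T r u₀ v₀ ≤ boxColor T r u v →
      (0 < w u + w v ↔ boxColor T r u v = boxColor T r u₀ v₀) := by
  have hΔpos : ∀ i, 0 < (T i).maxDegree := fun i => by linarith [hΔ i]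
  set k := ((T i).edgeColor (r i) (u₀ i) (v₀ i) + depthExcept T r i u₀) % (T i).maxDegree
  have hk : k < (T i).maxDegree := Nat.mod_lt _ (hΔpos i)
  refine ⟨fun z => (T i).hitWeight (r i) k (depthExcept T r i z) (z i), ?_⟩
  rintro u v ⟨j, hj, hoj⟩ hle
  rw [boxColor_eq hi₀ ho₀, boxColor_eq hj hoj] at hle ⊢
  have hk' := Nat.mod_lt ((T j).edgeColor (r j) (u j) (v j) + depthExcept T r j u) (hΔpos j)
  rcases lt_trichotomy j i with hji | rfl | hij
  · have := blockStart_add_le (T := T) hji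
    omega
  · beta_reduce
    rw [← depthExcept_congr hoj, (htree j).hitWeight_add_pos_iff hj, Nat.add_left_cancel_iff]
  · have hne : blockStart T j + _ ≠ blockStart T i + k :=
      fun h => hij.ne' (eq_of_blockStart_add_eq hk' hk h).1
    refine iff_of_false (not_lt.2 ?_) hne
    simp only [hoj i hij.ne]
    rcases depthExcept_adj (r := r) (htree j) hij.ne' hj hoj with h | h
    · rw [h]
      exact hitWeight_add_succ_nonpos (hΔ i) k _ _
    · rw [h, add_comm]
      exact hitWeight_add_succ_nonpos (hΔ i) k _ _

theorem isPMD_boxColor :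
    IsPMD (boxProdPi T) fun q : Fin (∑ i, (T i).maxDegree) =>
      colorClass (boxProdPi T) (boxColor T r) q := by
  have hΔpos : ∀ i, 0 < (T i).maxDegree := fun i => by linarith [hΔ i]
  refine isPMD_colorClass ?_ ?_ ?_ fun u₀ v₀ ⟨i, hi₀, ho₀⟩ =>
    exists_weight_boxColor htree hΔ hi₀ ho₀
  · rintro u v ⟨i, hi, hoth⟩
    rw [boxColor_eq hi hoth, boxColor_eq hi.symm fun j hj => (hoth j hj).symm,
      (htree i).edgeColor_comm hi, depthExcept_congr hoth]
  · rintro u v ⟨i, hi, hoth⟩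
    rw [boxColor_eq hi hoth]
    exact (Nat.add_lt_add_left (Nat.mod_lt _ (hΔpos i)) _).trans_le (blockStart_add_le_sum i)
  · rintro z a b ⟨i, hi, hoi⟩ ⟨j, hj, hoj⟩ h
    rw [boxColor_eq hi hoi, boxColor_eq hj hoj] at h
    obtain ⟨rfl, hmod⟩ :=
      eq_of_blockStart_add_eq (Nat.mod_lt _ (hΔpos i)) (Nat.mod_lt _ (hΔpos j)) h
    have hai : a i = b i := (htree i).edgeColor_injective hi hj
      ((Nat.ModEq.add_right_cancel' _ hmod).eq_of_lt_of_lt (edgeColor_lt (hΔpos i) _ _)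
        (edgeColor_lt (hΔpos i) _ _))
    funext l
    by_cases hl : l = i
    · exact hl ▸ hai
    · rw [← hoi l hl, ← hoj l hl]

end BoxProduct

theorem pmd_boxProd_trees_general {n : ℕ} {W : Fin n → Type*} [∀ i, Fintype (W i)]
    (T : ∀ i, SimpleGraph (W i)) [∀ i, DecidableRel (T i).Adj]
    (htree : ∀ i, (T i).IsTree) (hedge : ∀ i, (T i).edgeSet.Nonempty)
    (hK2 : ∀ i, ¬ Nonempty ((T i) ≃g (⊤ : SimpleGraph (Fin 2)))) :
    pmd (boxProdPi T) = ∑ i, (T i).maxDegree := by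
  have hadj : ∀ i, ∃ x y, (T i).Adj x y := fun i => by
    obtain ⟨e, he⟩ := hedge i
    induction e using Sym2.ind with
    | _ x y => exact ⟨x, y, he⟩
  choose r y hr using hadj
  have hΔ : ∀ i, 2 ≤ (T i).maxDegree := fun i => (htree i).two_le_maxDegree (hr i) (hK2 i)
  refine pmd_eq_of_isPMD (isPMD_boxColor (r := r) htree hΔ) fun p E hE => ?_
  have hmax : ∀ i, ∃ x, (T i).maxDegree = (T i).degree x := fun i =>
    haveI : Nonempty (W i) := ⟨r i⟩
    (T i).exists_maximal_degree_vertex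
  choose x hx using hmax
  simpa only [hx] using sum_degree_le_of_isPMD_boxProdPi T hE x

/-- If `T₁, …, Tₙ` are trees with at least one edge, none isomorphic to `K₂`, then
`pmd(T₁ □ ⋯ □ Tₙ) = Δ(T₁) + ⋯ + Δ(Tₙ)`, the maximum degree of the product. -/
theorem pmd_boxProd_trees {n : ℕ} {W : Fin n → Type*} [∀ i, Fintype (W i)]
    [∀ i, DecidableEq (W i)] (T : ∀ i, SimpleGraph (W i)) [∀ i, DecidableRel (T i).Adj]
    (htree : ∀ i, (T i).IsTree) (hedge : ∀ i, (T i).edgeSet.Nonempty)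
    (hK2 : ∀ i, ¬ Nonempty ((T i) ≃g (⊤ : SimpleGraph (Fin 2)))) :
    pmd (boxProdPi T) = ∑ i, (T i).maxDegree :=
  pmd_boxProd_trees_general T htree hedge hK2
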